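/- Let α ∈ ℝ, τ > 0, h > 0 and let x : ℤ × ℤ → ℝ be a grid function with x_s(n,i) ≠ 0 for all (n,i), satisfying the invariant scheme for the SMHD equations with parabolic bottom concave up, i.e. with B̌(n,i) = (2(cosh τ − 1)/τ²) x(n,i): x_tť(n,i) − α² x_sš(n,i) + [1/(x_s(n+1,i) x_s(n−1,i)) − 1/(x_s(n+1,i−1) x_s(n−1,i−1))]/h − (2(cosh τ − 1)/τ²) x(n,i) = 0 for all (n,i). Define T(n,i) = x(n,i)(e^{t_{n+1}} − e^{t_n})/τ − e^{t_n} x_t(n,i), with t_n = nτ. Then the additional finite-difference conservation law holds: (T(n,i) − T(n−1,i))/τ − ( e^{t_n}[1/(x_s(n+1,i) x_s(n−1,i)) − α² x_s(n,i)] − e^{t_n}[1/(x_s(n+1,i−1) x_s(n−1,i−1)) − α² x_s(n,i−1)] )/h = 0 for all (n,i). -/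

import Mathlib

/-- Forward time difference on a uniform mesh with time step τ. -/
noncomputable def xt (τ : ℝ) (x : ℤ → ℤ → ℝ) (n i : ℤ) : ℝ := (x (n + 1) i - x n i) / τ

/-- Forward space difference on a uniform mesh with space step h. -/
noncomputable def xs (h : ℝ) (x : ℤ → ℤ → ℝ) (n i : ℤ) : ℝ := (x n (i + 1) - x n i) / h

/-- Second time difference. -/
noncomputable def xtt (τ : ℝ) (x : ℤ → ℤ → ℝ) (n i : ℤ) : ℝ :=
  (x (n + 1) i - 2 * x n i + x (n - 1) i) / τ ^ 2

/-- Second space difference. -/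
noncomputable def xss (h : ℝ) (x : ℤ → ℤ → ℝ) (n i : ℤ) : ℝ :=
  (x n (i + 1) - 2 * x n i + x n (i - 1)) / h ^ 2

/-- Conserved density of the first additional conservation law for the
parabolic bottom concave up. -/
noncomputable def Tpl (α τ h : ℝ) (x : ℤ → ℤ → ℝ) (n i : ℤ) : ℝ :=
  x n i * (Real.exp (((n : ℝ) + 1) * τ) - Real.exp ((n : ℝ) * τ)) / τ
    - Real.exp ((n : ℝ) * τ) * xt τ x n i

/-! The conservation law is `-e^{t_n}` times the scheme. Since `e^{t_n}` solves the
continuous equation `y'' = y`, its samples satisfy `e^{t_{n+1}} + e^{t_{n-1}} = 2 cosh τ · e^{t_n}`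
exactly, so the backward time difference of `T` is `-e^{t_n} (x_tť - B̌)`; the remaining terms
are already a backward space difference, because `x_sš` is the backward difference of `x_s`. -/

theorem Real.exp_add_add_exp_sub (t τ : ℝ) :
    Real.exp (t + τ) + Real.exp (t - τ) = 2 * Real.cosh τ * Real.exp t := by
  rw [Real.cosh_eq, Real.exp_add, sub_eq_add_neg, Real.exp_add]
  ring

theorem xss_eq_sub_xs_div (h : ℝ) (x : ℤ → ℤ → ℝ) (n i : ℤ) :
    xss h x n i = (xs h x n i - xs h x n (i - 1)) / h := by
  simp only [xss, xs, sub_add_cancel]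
  ring

theorem Tpl_sub_Tpl_pred_div (α τ h : ℝ) (x : ℤ → ℤ → ℝ) (n i : ℤ) :
    (Tpl α τ h x n i - Tpl α τ h x (n - 1) i) / τ
      = -Real.exp ((n : ℝ) * τ) * (xtt τ x n i - (2 * (Real.cosh τ - 1) / τ ^ 2) * x n i) := by
  have hexp := Real.exp_add_add_exp_sub ((n : ℝ) * τ) τ
  rw [← add_one_mul, ← sub_one_mul] at hexp
  simp only [Tpl, xt, xtt, Int.cast_sub, Int.cast_one, sub_add_cancel]
  linear_combination (x n i / τ ^ 2) * hexp

theorem fd_smhd_parabolic_up_cl1_general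
    (α τ h : ℝ)
    (x : ℤ → ℤ → ℝ)
    (scheme : ∀ n i : ℤ,
      xtt τ x n i - α ^ 2 * xss h x n i
        + (1 / (xs h x (n + 1) i * xs h x (n - 1) i)
            - 1 / (xs h x (n + 1) (i - 1) * xs h x (n - 1) (i - 1))) / h
        - (2 * (Real.cosh τ - 1) / τ ^ 2) * x n i = 0) :
    ∀ n i : ℤ,
      (Tpl α τ h x n i - Tpl α τ h x (n - 1) i) / τ
        - (Real.exp ((n : ℝ) * τ)
              * (1 / (xs h x (n + 1) i * xs h x (n - 1) i) - α ^ 2 * xs h x n i)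
            - Real.exp ((n : ℝ) * τ)
              * (1 / (xs h x (n + 1) (i - 1) * xs h x (n - 1) (i - 1))
                  - α ^ 2 * xs h x n (i - 1))) / h = 0 := by
  intro n i
  have hscheme := scheme n i
  rw [xss_eq_sub_xs_div] at hscheme
  rw [Tpl_sub_Tpl_pred_div]
  linear_combination (-Real.exp ((n : ℝ) * τ)) * hscheme

/-- first additional finite-difference conservation law for the
invariant SMHD scheme with parabolic bottom concave up. -/
theorem fd_smhd_parabolic_up_cl1
    (α τ h : ℝ) (hτ : 0 < τ) (hh : 0 < h)
    (x : ℤ → ℤ → ℝ) (hxs : ∀ n i, xs h x n i ≠ 0)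
    (scheme : ∀ n i : ℤ,
      xtt τ x n i - α ^ 2 * xss h x n i
        + (1 / (xs h x (n + 1) i * xs h x (n - 1) i)
            - 1 / (xs h x (n + 1) (i - 1) * xs h x (n - 1) (i - 1))) / h
        - (2 * (Real.cosh τ - 1) / τ ^ 2) * x n i = 0) :
    ∀ n i : ℤ,
      (Tpl α τ h x n i - Tpl α τ h x (n - 1) i) / τ
        - (Real.exp ((n : ℝ) * τ)
              * (1 / (xs h x (n + 1) i * xs h x (n - 1) i) - α ^ 2 * xs h x n i)
            - Real.exp ((n : ℝ) * τ)
              * (1 / (xs h x (n + 1) (i - 1) * xs h x (n - 1) (i - 1))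
                  - α ^ 2 * xs h x n (i - 1))) / h = 0 :=
  fd_smhd_parabolic_up_cl1_general α τ h x scheme
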